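/- arXiv:2211.01533 — 2 statements merged into one kernel-verified Lean document; each statement's English description precedes it below -/
import Mathlib

section
/- Let n be a positive integer and let A : Fin n → Fin n → Fin n → Fin n → ℂ be a family of complex numbers, written A α β μ ν, satisfying the symmetries A α β μ ν = A μ β α ν = A α ν μ β and A α β μ ν = conj (A β α ν μ). Suppose that for all vectors ξ, η : Fin n → ℂ, the quantity ∑ α β μ ν, A α β μ ν * (ξ α * conj (η β) - η α * conj (ξ β)) * conj (ξ ν * conj (η μ) - η ν * conj (ξ μ)) is a non-negative real number. Then for all ξ, η : Fin n → ℂ, the quantity Q(ξ,η) := ∑ α β μ ν, A α β μ ν * ξ α * conj (ξ β) * η μ * conj (η ν) is real and satisfies |Q(ξ,η)|² ≤ Q(ξ,ξ) * Q(η,η). -/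
open Finset

/-- The antisymmetrized quadratic form of the tensor `A`. -/
noncomputable def Dform (n : ℕ) (A : Fin n → Fin n → Fin n → Fin n → ℂ) (ξ η : Fin n → ℂ) : ℂ :=
  ∑ α, ∑ β, ∑ μ, ∑ ν,
    A α β μ ν * (ξ α * (starRingEnd ℂ) (η β) - η α * (starRingEnd ℂ) (ξ β)) *
      (starRingEnd ℂ) (ξ ν * (starRingEnd ℂ) (η μ) - η ν * (starRingEnd ℂ) (ξ μ))

/-- The bisectional form of the tensor `A`. -/
noncomputable def Qform (n : ℕ) (A : Fin n → Fin n → Fin n → Fin n → ℂ) (ξ η : Fin n → ℂ) : ℂ :=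
  ∑ α, ∑ β, ∑ μ, ∑ ν,
    A α β μ ν * ξ α * (starRingEnd ℂ) (ξ β) * η μ * (starRingEnd ℂ) (η ν)

/-! ### Auxiliary sum-reindexing lemmas -/

lemma luAux_sum_comm3 {M I : Type*} [AddCommMonoid M] [Fintype I] (g : I → I → I → M) :
    (∑ β, ∑ μ, ∑ ν, g β μ ν) = ∑ ν, ∑ μ, ∑ β, g β μ ν := by
  calc (∑ β, ∑ μ, ∑ ν, g β μ ν)
      = ∑ μ, ∑ β, ∑ ν, g β μ ν := by rw [Finset.sum_comm]
    _ = ∑ μ, ∑ ν, ∑ β, g β μ ν := Finset.sum_congr rfl fun μ _ => by rw [Finset.sum_comm]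
    _ = ∑ ν, ∑ μ, ∑ β, g β μ ν := by rw [Finset.sum_comm]

lemma luAux_sum_swap24 {M I : Type*} [AddCommMonoid M] [Fintype I] (g : I → I → I → I → M) :
    (∑ α, ∑ β, ∑ μ, ∑ ν, g α β μ ν) = ∑ α, ∑ β, ∑ μ, ∑ ν, g α ν μ β :=
  Finset.sum_congr rfl fun α _ => luAux_sum_comm3 (g α)

lemma luAux_sum_swap13 {M I : Type*} [AddCommMonoid M] [Fintype I] (g : I → I → I → I → M) :
    (∑ α, ∑ β, ∑ μ, ∑ ν, g α β μ ν) = ∑ α, ∑ β, ∑ μ, ∑ ν, g μ β α ν :=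
  luAux_sum_comm3 (fun α β μ => ∑ ν, g α β μ ν)

lemma luAux_sum_pairswap {M I : Type*} [AddCommMonoid M] [Fintype I] (g : I → I → I → I → M) :
    (∑ α, ∑ β, ∑ μ, ∑ ν, g α β μ ν) = ∑ α, ∑ β, ∑ μ, ∑ ν, g μ ν α β :=
  (luAux_sum_swap13 g).trans (luAux_sum_swap24 (fun α β μ ν => g μ β α ν))

/-! ### Symmetry of the bisectional form -/

lemma luAux_qform_symm (n : ℕ) (A : Fin n → Fin n → Fin n → Fin n → ℂ)
    (hsym1 : ∀ α β μ ν, A α β μ ν = A μ β α ν)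
    (hsym2 : ∀ α β μ ν, A α β μ ν = A α ν μ β)
    (ξ η : Fin n → ℂ) : Qform n A η ξ = Qform n A ξ η := by
  have hpair : ∀ α β μ ν, A α β μ ν = A μ ν α β :=
    fun α β μ ν => (hsym1 α β μ ν).trans (hsym2 μ β α ν)
  calc Qform n A η ξ
      = ∑ α, ∑ β, ∑ μ, ∑ ν,
          A μ ν α β * η α * (starRingEnd ℂ) (η β) * ξ μ * (starRingEnd ℂ) (ξ ν) := by
        simp only [Qform]
        exact Finset.sum_congr rfl fun α _ => Finset.sum_congr rfl fun β _ =>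
          Finset.sum_congr rfl fun μ _ => Finset.sum_congr rfl fun ν _ => by
            rw [hpair]
    _ = ∑ α, ∑ β, ∑ μ, ∑ ν,
          A α β μ ν * η μ * (starRingEnd ℂ) (η ν) * ξ α * (starRingEnd ℂ) (ξ β) :=
        luAux_sum_pairswap _
    _ = Qform n A ξ η := by
        simp only [Qform]
        exact Finset.sum_congr rfl fun α _ => Finset.sum_congr rfl fun β _ =>
          Finset.sum_congr rfl fun μ _ => Finset.sum_congr rfl fun ν _ => by ring

/-! ### `D(ξ,η) + D(ξ,iη) = 4 Q(ξ,η)` -/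

lemma luAux_key2 (n : ℕ) (A : Fin n → Fin n → Fin n → Fin n → ℂ)
    (hsym1 : ∀ α β μ ν, A α β μ ν = A μ β α ν)
    (hsym2 : ∀ α β μ ν, A α β μ ν = A α ν μ β)
    (ξ η : Fin n → ℂ) :
    Dform n A ξ η + Dform n A ξ (fun i => Complex.I * η i) = 4 * Qform n A ξ η := by
  have T1 : (∑ α, ∑ β, ∑ μ, ∑ ν,
      A α β μ ν * ξ α * (starRingEnd ℂ) (η β) * η μ * (starRingEnd ℂ) (ξ ν))
      = Qform n A ξ η := by
    calc (∑ α, ∑ β, ∑ μ, ∑ ν,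
        A α β μ ν * ξ α * (starRingEnd ℂ) (η β) * η μ * (starRingEnd ℂ) (ξ ν))
        = ∑ α, ∑ β, ∑ μ, ∑ ν,
            A α ν μ β * ξ α * (starRingEnd ℂ) (η β) * η μ * (starRingEnd ℂ) (ξ ν) :=
          Finset.sum_congr rfl fun α _ => Finset.sum_congr rfl fun β _ =>
            Finset.sum_congr rfl fun μ _ => Finset.sum_congr rfl fun ν _ => by
              rw [← hsym2]
      _ = ∑ α, ∑ β, ∑ μ, ∑ ν,
            A α β μ ν * ξ α * (starRingEnd ℂ) (η ν) * η μ * (starRingEnd ℂ) (ξ β) :=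
          luAux_sum_swap24 _
      _ = Qform n A ξ η := by
          simp only [Qform]
          exact Finset.sum_congr rfl fun α _ => Finset.sum_congr rfl fun β _ =>
            Finset.sum_congr rfl fun μ _ => Finset.sum_congr rfl fun ν _ => by ring
  have T4 : (∑ α, ∑ β, ∑ μ, ∑ ν,
      A α β μ ν * η α * (starRingEnd ℂ) (ξ β) * ξ μ * (starRingEnd ℂ) (η ν))
      = Qform n A ξ η := by
    calc (∑ α, ∑ β, ∑ μ, ∑ ν,
        A α β μ ν * η α * (starRingEnd ℂ) (ξ β) * ξ μ * (starRingEnd ℂ) (η ν))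
        = ∑ α, ∑ β, ∑ μ, ∑ ν,
            A μ β α ν * η α * (starRingEnd ℂ) (ξ β) * ξ μ * (starRingEnd ℂ) (η ν) :=
          Finset.sum_congr rfl fun α _ => Finset.sum_congr rfl fun β _ =>
            Finset.sum_congr rfl fun μ _ => Finset.sum_congr rfl fun ν _ => by
              rw [← hsym1]
      _ = ∑ α, ∑ β, ∑ μ, ∑ ν,
            A α β μ ν * η μ * (starRingEnd ℂ) (ξ β) * ξ α * (starRingEnd ℂ) (η ν) :=
          luAux_sum_swap13 _
      _ = Qform n A ξ η := by
          simp only [Qform]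
          exact Finset.sum_congr rfl fun α _ => Finset.sum_congr rfl fun β _ =>
            Finset.sum_congr rfl fun μ _ => Finset.sum_congr rfl fun ν _ => by ring
  have comb : Dform n A ξ η + Dform n A ξ (fun i => Complex.I * η i)
      = 2 * (∑ α, ∑ β, ∑ μ, ∑ ν,
          A α β μ ν * ξ α * (starRingEnd ℂ) (η β) * η μ * (starRingEnd ℂ) (ξ ν))
        + 2 * (∑ α, ∑ β, ∑ μ, ∑ ν,
          A α β μ ν * η α * (starRingEnd ℂ) (ξ β) * ξ μ * (starRingEnd ℂ) (η ν)) := by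
    simp only [Dform, Finset.mul_sum, ← Finset.sum_add_distrib]
    refine Finset.sum_congr rfl fun α _ => Finset.sum_congr rfl fun β _ =>
      Finset.sum_congr rfl fun μ _ => Finset.sum_congr rfl fun ν _ => ?_
    simp only [map_mul, map_sub, map_neg, Complex.conj_I, Complex.conj_conj]
    ring_nf
    simp only [Complex.I_sq]
    ring
  rw [comb, T1, T4]; ring

/-! ### The wedge identity `D(ξ+sη, (i/2)(sη-ξ)) = Q(ξ,ξ) + s⁴Q(η,η) - s²(Q(ξ,η)+Q(η,ξ))` -/

lemma luAux_key1 (n : ℕ) (A : Fin n → Fin n → Fin n → Fin n → ℂ) (ξ η : Fin n → ℂ) (s : ℝ) :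
    Dform n A (fun i => ξ i + (s:ℂ) * η i) (fun i => Complex.I/2 * ((s:ℂ) * η i - ξ i))
      = Qform n A ξ ξ + (s:ℂ)^4 * Qform n A η η
        - (s:ℂ)^2 * (Qform n A ξ η + Qform n A η ξ) := by
  simp only [Dform, Qform, Finset.mul_sum, ← Finset.sum_add_distrib, ← Finset.sum_sub_distrib]
  refine Finset.sum_congr rfl fun α _ => Finset.sum_congr rfl fun β _ =>
    Finset.sum_congr rfl fun μ _ => Finset.sum_congr rfl fun ν _ => ?_
  simp only [map_mul, map_add, map_sub, map_div₀, Complex.conj_I, Complex.conj_ofReal,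
    map_ofNat, Complex.conj_conj, map_neg]
  ring_nf
  simp only [Complex.I_sq]
  ring

/-! ### The real Cauchy–Schwarz endgame -/

lemma luAux_cs_real (a b c : ℝ) (hc : 0 ≤ c) (hb : 0 ≤ b)
    (h : ∀ s : ℝ, 0 ≤ a + s^4 * b - 2 * s^2 * c) : c^2 ≤ a * b := by
  rcases eq_or_lt_of_le hb with hb0 | hbpos
  · have hc0 : c = 0 := by
      by_contra hcne
      have hcpos : 0 < c := lt_of_le_of_ne hc (Ne.symm hcne)
      have ha : 0 ≤ a := by have := h 0; nlinarith
      have hk := h (Real.sqrt ((a + c)/(2*c)))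
      have hs2 : (Real.sqrt ((a + c)/(2*c)))^2 = (a + c)/(2*c) :=
        Real.sq_sqrt (by positivity)
      rw [show (Real.sqrt ((a + c)/(2*c)))^4 = ((Real.sqrt ((a + c)/(2*c)))^2)^2 from by ring,
        hs2, ← hb0] at hk
      have hmul : (a + c)/(2*c) * c = (a + c)/2 := by field_simp
      nlinarith [hk, hmul]
    rw [hc0, ← hb0]
    have ha : 0 ≤ a := by have := h 0; nlinarith
    nlinarith
  · have hbne : b ≠ 0 := ne_of_gt hbpos
    have hs2 : (Real.sqrt (c/b))^2 = c/b := Real.sq_sqrt (div_nonneg hc (le_of_lt hbpos))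
    have hk := h (Real.sqrt (c/b))
    rw [show (Real.sqrt (c/b))^4 = ((Real.sqrt (c/b))^2)^2 from by ring, hs2] at hk
    have hcb : (c/b) * b = c := div_mul_cancel₀ c hbne
    nlinarith [hk, hcb, hbpos, mul_nonneg hk (le_of_lt hbpos)]

theorem lu_lemma_nonneg (n : ℕ) (hn : 0 < n)
    (A : Fin n → Fin n → Fin n → Fin n → ℂ)
    (hsym1 : ∀ α β μ ν, A α β μ ν = A μ β α ν)
    (hsym2 : ∀ α β μ ν, A α β μ ν = A α ν μ β)
    (hreal : ∀ α β μ ν, A α β μ ν = (starRingEnd ℂ) (A β α ν μ))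
    (hpos : ∀ ξ η : Fin n → ℂ, (Dform n A ξ η).im = 0 ∧ 0 ≤ (Dform n A ξ η).re) :
    ∀ ξ η : Fin n → ℂ, (Qform n A ξ η).im = 0 ∧
      ‖Qform n A ξ η‖ ^ 2 ≤ (Qform n A ξ ξ).re * (Qform n A η η).re := by
  have hQ : ∀ ξ η : Fin n → ℂ, (Qform n A ξ η).im = 0 ∧ 0 ≤ (Qform n A ξ η).re := by
    intro ξ η
    have h2 := luAux_key2 n A hsym1 hsym2 ξ η
    obtain ⟨i1, r1⟩ := hpos ξ η
    obtain ⟨i2, r2⟩ := hpos ξ (fun i => Complex.I * η i)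
    have him := congrArg Complex.im h2
    have hre := congrArg Complex.re h2
    simp only [Complex.add_im, Complex.add_re, Complex.mul_im, Complex.mul_re,
      Complex.re_ofNat, Complex.im_ofNat, i1, i2, r1] at him hre
    constructor
    · linarith
    · linarith
  intro ξ η
  obtain ⟨hci, hcr⟩ := hQ ξ η
  obtain ⟨hai, har⟩ := hQ ξ ξ
  obtain ⟨hbi, hbr⟩ := hQ η η
  set a := (Qform n A ξ ξ).re with ha
  set b := (Qform n A η η).re with hb
  set c := (Qform n A ξ η).re with hc
  have hsymQ := luAux_qform_symm n A hsym1 hsym2 ξ η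
  have hkey : ∀ s : ℝ, 0 ≤ a + s^4 * b - 2 * s^2 * c := by
    intro s
    have h1 := luAux_key1 n A ξ η s
    rw [hsymQ] at h1
    obtain ⟨_, rD⟩ := hpos (fun i => ξ i + (s:ℂ) * η i)
      (fun i => Complex.I/2 * ((s:ℂ) * η i - ξ i))
    have hre := congrArg Complex.re h1
    have e4 : ((s:ℂ)^4) = ((s^4 : ℝ) : ℂ) := by push_cast; ring
    have e2 : ((s:ℂ)^2) = ((s^2 : ℝ) : ℂ) := by push_cast; ring
    rw [e4, e2] at hre
    simp only [Complex.add_re, Complex.sub_re, Complex.mul_re, Complex.add_im,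
      Complex.ofReal_re, Complex.ofReal_im, hci, hai, hbi] at hre
    rw [hre] at rD
    linarith
  refine ⟨hci, ?_⟩
  have hQc : Qform n A ξ η = ((c:ℝ) : ℂ) := by
    apply Complex.ext <;> simp [hci, hc]
  rw [hQc, Complex.norm_real, Real.norm_eq_abs, sq_abs]
  exact luAux_cs_real a b c hcr hbr hkey
end

section
/- Let n be a positive integer and let A : Fin n → Fin n → Fin n → Fin n → ℂ satisfy A α β μ ν = A μ β α ν = A α ν μ β and A α β μ ν = conj (A β α ν μ). Suppose that for all ξ, η : Fin n → ℂ, ∑ α β μ ν, A α β μ ν * (ξ α * conj (η β) - η α * conj (ξ β)) * conj (ξ ν * conj (η μ) - η ν * conj (ξ μ)) has non-positive real part and zero imaginary part. Then for all ξ, η : Fin n → ℂ, letting Q(ξ,η) := ∑ α β μ ν, A α β μ ν * ξ α * conj (ξ β) * η μ * conj (η ν), we have |Q(ξ,η)|² ≤ Q(ξ,ξ) * Q(η,η) (where Q(ξ,ξ) and Q(η,η) are non-positive reals, so the right-hand side is a non-negative real). -/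
open Finset

variable {n : ℕ} {A : Fin n → Fin n → Fin n → Fin n → ℂ}

lemma sum4_comm13 {M : Type*} [AddCommMonoid M] {n : ℕ} (f : Fin n → Fin n → Fin n → Fin n → M) :
    (∑ a, ∑ b, ∑ c, ∑ d, f a b c d) = ∑ a, ∑ b, ∑ c, ∑ d, f c b a d :=
  calc (∑ a, ∑ b, ∑ c, ∑ d, f a b c d)
      = ∑ a, ∑ c, ∑ b, ∑ d, f a b c d := Finset.sum_congr rfl fun _ _ => Finset.sum_comm
    _ = ∑ c, ∑ a, ∑ b, ∑ d, f a b c d := Finset.sum_comm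
    _ = ∑ a, ∑ b, ∑ c, ∑ d, f c b a d := Finset.sum_congr rfl fun _ _ => Finset.sum_comm

lemma sum3_comm13 {M : Type*} [AddCommMonoid M] {n : ℕ} (g : Fin n → Fin n → Fin n → M) :
    (∑ b, ∑ c, ∑ d, g b c d) = ∑ b, ∑ c, ∑ d, g d c b :=
  calc (∑ b, ∑ c, ∑ d, g b c d)
      = ∑ b, ∑ d, ∑ c, g b c d := Finset.sum_congr rfl fun _ _ => Finset.sum_comm
    _ = ∑ d, ∑ b, ∑ c, g b c d := Finset.sum_comm
    _ = ∑ b, ∑ c, ∑ d, g d c b := Finset.sum_congr rfl fun _ _ => Finset.sum_comm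

lemma sum4_comm24 {M : Type*} [AddCommMonoid M] {n : ℕ} (f : Fin n → Fin n → Fin n → Fin n → M) :
    (∑ a, ∑ b, ∑ c, ∑ d, f a b c d) = ∑ a, ∑ b, ∑ c, ∑ d, f a d c b :=
  Finset.sum_congr rfl fun a _ => sum3_comm13 (fun b c d => f a b c d)

lemma sum4_comm12 {M : Type*} [AddCommMonoid M] {n : ℕ} (f : Fin n → Fin n → Fin n → Fin n → M) :
    (∑ a, ∑ b, ∑ c, ∑ d, f a b c d) = ∑ a, ∑ b, ∑ c, ∑ d, f b a c d :=
  Finset.sum_comm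

lemma sum4_comm34 {M : Type*} [AddCommMonoid M] {n : ℕ} (f : Fin n → Fin n → Fin n → Fin n → M) :
    (∑ a, ∑ b, ∑ c, ∑ d, f a b c d) = ∑ a, ∑ b, ∑ c, ∑ d, f a b d c :=
  Finset.sum_congr rfl fun _ _ => Finset.sum_congr rfl fun _ _ => Finset.sum_comm

lemma sum4_congr {M : Type*} [AddCommMonoid M] {n : ℕ} (f g : Fin n → Fin n → Fin n → Fin n → M)
    (h : ∀ a b c d, f a b c d = g a b c d) :
    (∑ a, ∑ b, ∑ c, ∑ d, f a b c d) = ∑ a, ∑ b, ∑ c, ∑ d, g a b c d := by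
  simp only [h]

-- Q is real
lemma Qconj (hreal : ∀ α β μ ν, A α β μ ν = (starRingEnd ℂ) (A β α ν μ)) (ξ η : Fin n → ℂ) :
    (starRingEnd ℂ) (Qform n A ξ η) = Qform n A ξ η := by
  have hc : ∀ a b c d, (starRingEnd ℂ) (A a b c d) = A b a d c := fun a b c d => by
    rw [hreal b a d c]
  unfold Qform
  simp only [map_sum, map_mul, Complex.conj_conj, hc]
  calc (∑ a, ∑ b, ∑ c, ∑ d, A b a d c * (starRingEnd ℂ) (ξ a) * ξ b * (starRingEnd ℂ) (η c) * η d)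
      = ∑ a, ∑ b, ∑ c, ∑ d, A a b d c * (starRingEnd ℂ) (ξ b) * ξ a * (starRingEnd ℂ) (η c) * η d :=
        sum4_comm12 (fun a b c d => A b a d c * (starRingEnd ℂ) (ξ a) * ξ b * (starRingEnd ℂ) (η c) * η d)
    _ = ∑ a, ∑ b, ∑ c, ∑ d, A a b c d * (starRingEnd ℂ) (ξ b) * ξ a * (starRingEnd ℂ) (η d) * η c :=
        sum4_comm34 (fun a b c d => A a b d c * (starRingEnd ℂ) (ξ b) * ξ a * (starRingEnd ℂ) (η c) * η d)
    _ = ∑ a, ∑ b, ∑ c, ∑ d, A a b c d * ξ a * (starRingEnd ℂ) (ξ b) * η c * (starRingEnd ℂ) (η d) :=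
        sum4_congr _ _ (fun a b c d => by ring)

lemma Qsymm (hsym1 : ∀ α β μ ν, A α β μ ν = A μ β α ν)
    (hsym2 : ∀ α β μ ν, A α β μ ν = A α ν μ β) (ξ η : Fin n → ℂ) :
    Qform n A η ξ = Qform n A ξ η := by
  have hA : ∀ a b c d, A a b c d = A c d a b := fun a b c d => by
    rw [hsym1 a b c d, hsym2 c b a d]
  unfold Qform
  calc (∑ a, ∑ b, ∑ c, ∑ d, A a b c d * η a * (starRingEnd ℂ) (η b) * ξ c * (starRingEnd ℂ) (ξ d))
      = ∑ a, ∑ b, ∑ c, ∑ d, A c d a b * η a * (starRingEnd ℂ) (η b) * ξ c * (starRingEnd ℂ) (ξ d) :=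
        sum4_congr _ _ (fun a b c d => by rw [← hA])
    _ = ∑ a, ∑ b, ∑ c, ∑ d, A a d c b * η c * (starRingEnd ℂ) (η b) * ξ a * (starRingEnd ℂ) (ξ d) :=
        sum4_comm13 (fun a b c d => A c d a b * η a * (starRingEnd ℂ) (η b) * ξ c * (starRingEnd ℂ) (ξ d))
    _ = ∑ a, ∑ b, ∑ c, ∑ d, A a b c d * η c * (starRingEnd ℂ) (η d) * ξ a * (starRingEnd ℂ) (ξ b) :=
        sum4_comm24 (fun a b c d => A a d c b * η c * (starRingEnd ℂ) (η b) * ξ a * (starRingEnd ℂ) (ξ d))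
    _ = ∑ a, ∑ b, ∑ c, ∑ d, A a b c d * ξ a * (starRingEnd ℂ) (ξ b) * η c * (starRingEnd ℂ) (η d) :=
        sum4_congr _ _ (fun a b c d => by ring)

lemma Qscale (s t : ℝ) (ξ η : Fin n → ℂ) :
    Qform n A (fun k => (s : ℂ) * ξ k) (fun k => (t : ℂ) * η k)
      = ((s ^ 2 * t ^ 2 : ℝ) : ℂ) * Qform n A ξ η := by
  unfold Qform
  simp only [Finset.mul_sum]
  refine sum4_congr _ _ (fun a b c d => ?_)
  simp only [map_mul, Complex.conj_ofReal]
  push_cast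
  ring

lemma keyI2 (hsym1 : ∀ α β μ ν, A α β μ ν = A μ β α ν)
    (hsym2 : ∀ α β μ ν, A α β μ ν = A α ν μ β) (ξ η : Fin n → ℂ) :
    Dform n A ξ η + Dform n A ξ (fun k => Complex.I * η k) = 4 * Qform n A ξ η := by
  have hT : (∑ a, ∑ b, ∑ c, ∑ d,
      A a b c d * (ξ a * (starRingEnd ℂ) (η b) * η c * (starRingEnd ℂ) (ξ d)))
      = Qform n A ξ η := by
    unfold Qform
    calc (∑ a, ∑ b, ∑ c, ∑ d, A a b c d * (ξ a * (starRingEnd ℂ) (η b) * η c * (starRingEnd ℂ) (ξ d)))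
        = ∑ a, ∑ b, ∑ c, ∑ d, A a d c b * (ξ a * (starRingEnd ℂ) (η b) * η c * (starRingEnd ℂ) (ξ d)) :=
          sum4_congr _ _ (fun a b c d => by rw [← hsym2])
      _ = ∑ a, ∑ b, ∑ c, ∑ d, A a b c d * (ξ a * (starRingEnd ℂ) (η d) * η c * (starRingEnd ℂ) (ξ b)) :=
          sum4_comm24 (fun a b c d => A a d c b * (ξ a * (starRingEnd ℂ) (η b) * η c * (starRingEnd ℂ) (ξ d)))
      _ = ∑ a, ∑ b, ∑ c, ∑ d, A a b c d * ξ a * (starRingEnd ℂ) (ξ b) * η c * (starRingEnd ℂ) (η d) :=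
          sum4_congr _ _ (fun a b c d => by ring)
  have hT' : (∑ a, ∑ b, ∑ c, ∑ d,
      A a b c d * (η a * (starRingEnd ℂ) (ξ b) * ξ c * (starRingEnd ℂ) (η d)))
      = Qform n A ξ η := by
    unfold Qform
    calc (∑ a, ∑ b, ∑ c, ∑ d, A a b c d * (η a * (starRingEnd ℂ) (ξ b) * ξ c * (starRingEnd ℂ) (η d)))
        = ∑ a, ∑ b, ∑ c, ∑ d, A c b a d * (η a * (starRingEnd ℂ) (ξ b) * ξ c * (starRingEnd ℂ) (η d)) :=
          sum4_congr _ _ (fun a b c d => by rw [← hsym1])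
      _ = ∑ a, ∑ b, ∑ c, ∑ d, A a b c d * (η c * (starRingEnd ℂ) (ξ b) * ξ a * (starRingEnd ℂ) (η d)) :=
          sum4_comm13 (fun a b c d => A c b a d * (η a * (starRingEnd ℂ) (ξ b) * ξ c * (starRingEnd ℂ) (η d)))
      _ = ∑ a, ∑ b, ∑ c, ∑ d, A a b c d * ξ a * (starRingEnd ℂ) (ξ b) * η c * (starRingEnd ℂ) (η d) :=
          sum4_congr _ _ (fun a b c d => by ring)
  have key : Dform n A ξ η + Dform n A ξ (fun k => Complex.I * η k)
      = 2 * (∑ a, ∑ b, ∑ c, ∑ d,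
          A a b c d * (ξ a * (starRingEnd ℂ) (η b) * η c * (starRingEnd ℂ) (ξ d)))
        + 2 * (∑ a, ∑ b, ∑ c, ∑ d,
          A a b c d * (η a * (starRingEnd ℂ) (ξ b) * ξ c * (starRingEnd ℂ) (η d))) := by
    unfold Dform
    have h3 : Complex.I ^ 3 = -Complex.I := by simp [pow_succ, Complex.I_sq]
    have h4 : Complex.I ^ 4 = 1 := by simp [pow_succ, Complex.I_sq]
    simp only [Finset.mul_sum, ← Finset.sum_add_distrib]
    refine sum4_congr _ _ (fun a b c d => ?_)
    simp only [map_mul, map_sub, map_add, map_neg, Complex.conj_conj, Complex.conj_I]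
    ring_nf
    simp only [Complex.I_sq, h3, h4]
    ring
  rw [key, hT, hT']
  ring

lemma keyI3 (ξ η : Fin n → ℂ) :
    Dform n A (fun k => ξ k + Complex.I * η k) (fun k => Complex.I * ξ k + η k)
      = 4 * Qform n A ξ ξ + 4 * Qform n A η η - 4 * Qform n A ξ η - 4 * Qform n A η ξ := by
  unfold Dform Qform
  have h3 : Complex.I ^ 3 = -Complex.I := by simp [pow_succ, Complex.I_sq]
  have h4 : Complex.I ^ 4 = 1 := by simp [pow_succ, Complex.I_sq]
  simp only [Finset.mul_sum, ← Finset.sum_add_distrib, ← Finset.sum_sub_distrib]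
  refine sum4_congr _ _ (fun a b c d => ?_)
  simp only [map_mul, map_sub, map_add, map_neg, Complex.conj_conj, Complex.conj_I]
  ring_nf
  simp only [Complex.I_sq, h3, h4]
  ring

lemma aux_real (a b c : ℝ) (hb : b ≤ 0) (hc : c ≤ 0)
    (h : ∀ s t : ℝ, s ^ 4 * a + t ^ 4 * b - 2 * s ^ 2 * t ^ 2 * c ≤ 0) : c ^ 2 ≤ a * b := by
  have ha : a ≤ 0 := by have := h 1 0; nlinarith [this]
  have hdeg : ∀ x y : ℝ, x ≤ 0 → y ≤ 0 → x = 0 →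
      (∀ s t : ℝ, s ^ 4 * x + t ^ 4 * y - 2 * s ^ 2 * t ^ 2 * c ≤ 0) → c = 0 := by
    intro x y hx hy hx0 hxy
    by_contra hne
    have hclt : c < 0 := lt_of_le_of_ne hc hne
    have hu : 0 ≤ (y - 1) / (2 * c) := by
      rw [div_nonneg_iff]
      right
      constructor <;> nlinarith
    have hs2 : Real.sqrt ((y - 1) / (2 * c)) ^ 2 = (y - 1) / (2 * c) := Real.sq_sqrt hu
    have hs4 : Real.sqrt ((y - 1) / (2 * c)) ^ 4 = ((y - 1) / (2 * c)) ^ 2 := by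
      rw [show (4 : ℕ) = 2 * 2 from rfl, pow_mul, hs2]
    have := hxy (Real.sqrt ((y - 1) / (2 * c))) 1
    rw [hs4, hs2, hx0] at this
    have h2c : (2 * c) ≠ 0 := by intro h0; nlinarith
    have hcc : (y - 1) / (2 * c) * c = (y - 1) / 2 := by field_simp
    norm_num at this
    nlinarith [hcc, this]
  rcases eq_or_lt_of_le ha with ha0 | ha0
  · have hc0 : c = 0 := hdeg a b ha hb ha0 h
    nlinarith
  rcases eq_or_lt_of_le hb with hb0 | hb0
  · have hc0 : c = 0 := by
      refine hdeg b a hb ha hb0 (fun s t => ?_)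
      nlinarith [h t s]
    nlinarith
  set p := Real.sqrt (-a) with hpdef
  set q := Real.sqrt (-b) with hqdef
  have hp : p ^ 2 = -a := Real.sq_sqrt (by linarith)
  have hq : q ^ 2 = -b := Real.sq_sqrt (by linarith)
  have hppos : 0 < p := Real.sqrt_pos.mpr (by linarith)
  have hqpos : 0 < q := Real.sqrt_pos.mpr (by linarith)
  have hsq : Real.sqrt q ^ 2 = q := Real.sq_sqrt hqpos.le
  have hsp : Real.sqrt p ^ 2 = p := Real.sq_sqrt hppos.le
  have h4q : Real.sqrt q ^ 4 = q ^ 2 := by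
    rw [show (4 : ℕ) = 2 * 2 from rfl, pow_mul, hsq]
  have h4p : Real.sqrt p ^ 4 = p ^ 2 := by
    rw [show (4 : ℕ) = 2 * 2 from rfl, pow_mul, hsp]
  have h1 := h (Real.sqrt q) (Real.sqrt p)
  rw [h4q, h4p, hsq, hsp] at h1
  -- h1 : q^2 * a + p^2 * b - 2*q*p*c ≤ 0
  have h2 : 0 ≤ p * q * (p * q + c) := by nlinarith
  have h3 : 0 ≤ p * q + c := by
    by_contra hlt
    push_neg at hlt
    nlinarith [mul_pos hppos hqpos]
  nlinarith

theorem lu_lemma_nonpos (n : ℕ) (hn : 0 < n)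
    (A : Fin n → Fin n → Fin n → Fin n → ℂ)
    (hsym1 : ∀ α β μ ν, A α β μ ν = A μ β α ν)
    (hsym2 : ∀ α β μ ν, A α β μ ν = A α ν μ β)
    (hreal : ∀ α β μ ν, A α β μ ν = (starRingEnd ℂ) (A β α ν μ))
    (hneg : ∀ ξ η : Fin n → ℂ, (Dform n A ξ η).im = 0 ∧ (Dform n A ξ η).re ≤ 0) :
    ∀ ξ η : Fin n → ℂ, (Qform n A ξ η).im = 0 ∧ (Qform n A ξ ξ).re ≤ 0 ∧
      (Qform n A η η).re ≤ 0 ∧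
      ‖Qform n A ξ η‖ ^ 2 ≤ (Qform n A ξ ξ).re * (Qform n A η η).re := by
  have qim : ∀ x y : Fin n → ℂ, (Qform n A x y).im = 0 := fun x y =>
    Complex.conj_eq_iff_im.mp (Qconj hreal x y)
  have qnonpos : ∀ x y : Fin n → ℂ, (Qform n A x y).re ≤ 0 := by
    intro x y
    have h1 := (hneg x y).2
    have h2 := (hneg x (fun k => Complex.I * y k)).2
    have e := congrArg Complex.re (keyI2 hsym1 hsym2 x y)
    simp only [Complex.add_re, Complex.mul_re] at e
    norm_num at e
    linarith
  intro ξ η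
  refine ⟨qim ξ η, qnonpos ξ ξ, qnonpos η η, ?_⟩
  have key : ∀ s t : ℝ, s ^ 4 * (Qform n A ξ ξ).re + t ^ 4 * (Qform n A η η).re
      - 2 * s ^ 2 * t ^ 2 * (Qform n A ξ η).re ≤ 0 := by
    intro s t
    have hD := (hneg (fun k => (s : ℂ) * ξ k + Complex.I * ((t : ℂ) * η k))
        (fun k => Complex.I * ((s : ℂ) * ξ k) + (t : ℂ) * η k)).2
    have e := keyI3 (A := A) (fun k => (s : ℂ) * ξ k) (fun k => (t : ℂ) * η k)
    rw [Qscale s s ξ ξ, Qscale t t η η, Qscale s t ξ η, Qscale t s η ξ,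
      Qsymm hsym1 hsym2 ξ η] at e
    rw [e] at hD
    simp only [Complex.add_re, Complex.sub_re, Complex.mul_re, Complex.re_ofReal_mul,
      Complex.ofReal_re, Complex.ofReal_im] at hD
    norm_num at hD
    nlinarith [hD]
  have habs : ‖Qform n A ξ η‖ ^ 2 = (Qform n A ξ η).re ^ 2 := by
    rw [Complex.sq_norm, Complex.normSq_apply, qim ξ η]
    ring
  rw [habs]
  exact aux_real _ _ _ (qnonpos η η) (qnonpos ξ η) key
end
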